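/- Let G be a connected bipartite graph with n vertices. Then the weighted vertex PI index PI_w(G) equals n times the first Zagreb index M_1(G), i.e., PI_w(G) = n · Σ_{v ∈ V} deg(v)². -/
import Mathlib


open Finset
open scoped Classical

/-- Number of vertices strictly closer to `u` than to `v`. -/
noncomputable def ncl {V : Type*} [Fintype V] (G : SimpleGraph V) (u v : V) : ℕ :=
  (Finset.univ.filter fun x => G.dist x u < G.dist x v).card

/-- Weighted vertex PI index: each edge `uv` contributes
`(deg u + deg v) * (n_u(e) + n_v(e))`; each edge is counted twice in the double sum. -/
noncomputable def PIw {V : Type*} [Fintype V] (G : SimpleGraph V) : ℝ :=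
  (∑ u, ∑ v, if G.Adj u v then
    (((G.degree u + G.degree v : ℕ) : ℝ) * ((ncl G u v + ncl G v u : ℕ) : ℝ)) else 0) / 2

lemma coloring_parity {V : Type*} {G : SimpleGraph V} (C : G.Coloring (Fin 2))
    {a b : V} (p : G.Walk a b) :
    (((C a : ℕ) : ZMod 2) + (p.length : ZMod 2)) = ((C b : ℕ) : ZMod 2) := by
  induction p with
  | nil => simp
  | cons h q ih =>
    rename_i x y z
    simp only [SimpleGraph.Walk.length_cons, Nat.cast_add, Nat.cast_one]
    have hne : C x ≠ C y := C.valid h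
    have hstep : ∀ a b : Fin 2, a ≠ b → ((a : ℕ) : ZMod 2) + 1 = ((b : ℕ) : ZMod 2) := by
      decide
    rw [← ih, ← hstep _ _ hne]; ring

lemma dist_ne_of_adj {V : Type*} {G : SimpleGraph V} (hconn : G.Connected)
    (C : G.Coloring (Fin 2)) {u v : V} (h : G.Adj u v) (x : V) :
    G.dist x u ≠ G.dist x v := by
  intro heq
  obtain ⟨p, hp⟩ := (hconn x u).exists_walk_length_eq_dist
  obtain ⟨q, hq⟩ := (hconn x v).exists_walk_length_eq_dist
  have h1 := coloring_parity C p
  have h2 := coloring_parity C q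
  rw [hp] at h1; rw [hq, ← heq] at h2
  have hu := (C u).isLt; have hv := (C v).isLt
  apply C.valid h
  have : ((C u : ℕ) : ZMod 2) = ((C v : ℕ) : ZMod 2) := by rw [← h1, ← h2]
  rw [ZMod.natCast_eq_natCast_iff] at this
  exact Fin.ext (Nat.ModEq.eq_of_lt_of_lt this hu hv)

lemma ncl_add {V : Type*} [Fintype V] {G : SimpleGraph V} (hconn : G.Connected)
    (C : G.Coloring (Fin 2)) {u v : V} (h : G.Adj u v) :
    ncl G u v + ncl G v u = Fintype.card V := by
  classical
  have heq : (Finset.univ.filter fun x => G.dist x v < G.dist x u) =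
      Finset.univ.filter fun x => ¬ G.dist x u < G.dist x v := by
    apply Finset.filter_congr
    intro x _
    have := dist_ne_of_adj hconn C h x
    omega
  rw [ncl, ncl, heq, Finset.card_filter_add_card_filter_not, Finset.card_univ]

theorem PIw_bipartite {V : Type*} [Fintype V] (G : SimpleGraph V)
    (hconn : G.Connected) (hbip : G.Colorable 2) :
    PIw G = (Fintype.card V : ℝ) * ∑ v, ((G.degree v : ℝ)) ^ 2 := by
  classical
  obtain ⟨C⟩ := hbip
  have key : ∀ u v : V, (if G.Adj u v then
      (((G.degree u + G.degree v : ℕ) : ℝ) * ((ncl G u v + ncl G v u : ℕ) : ℝ)) else 0)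
      = (Fintype.card V : ℝ) * ((if G.Adj u v then ((G.degree u : ℝ)) else 0)
        + (if G.Adj u v then ((G.degree v : ℝ)) else 0)) := by
    intro u v
    by_cases h : G.Adj u v
    · simp only [h, if_true, ncl_add hconn C h]
      push_cast; ring
    · simp [h]
  unfold PIw
  simp_rw [key, ← Finset.mul_sum, Finset.sum_add_distrib]
  have h1 : ∀ (c : V → ℝ) (u : V), (∑ v, if G.Adj u v then c u else 0)
      = (G.degree u : ℝ) * c u := by
    intro c u
    rw [← Finset.sum_filter, ← SimpleGraph.neighborFinset_eq_filter, Finset.sum_const,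
      nsmul_eq_mul, SimpleGraph.degree]
  have h2 : (∑ u, ∑ v, (if G.Adj u v then ((G.degree v : ℝ)) else 0))
      = ∑ v, ((G.degree v : ℝ))^2 := by
    rw [Finset.sum_comm]
    simp_rw [G.adj_comm, h1 (fun v => ((G.degree v : ℝ)))]
    exact Finset.sum_congr rfl fun v _ => (sq (G.degree v : ℝ)).symm
  have h3 : (∑ u, ∑ v, (if G.Adj u v then ((G.degree u : ℝ)) else 0))
      = ∑ v, ((G.degree v : ℝ))^2 := by
    simp_rw [h1 (fun v => ((G.degree v : ℝ)))]
    exact Finset.sum_congr rfl fun v _ => (sq (G.degree v : ℝ)).symm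
  rw [h2, h3]
  ring
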